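/- For every n ≥ 2, the connected subgraph arrangement 𝒜_{Δ_{n,1}} of the path-with-triangle graph Δ_{n,1} is factored; in fact, the partition with blocks π_1 = {H_{{1,n+1}}}, π_2 = {H_{{n+1}}, H_{{1}}, H_{{1,2}}, …, H_{{1,2,…,n}}}, and π_i = {H_X ∈ 𝒜_{Δ_{n,1}} : X ∩ {i,…,n} = ∅} ∖ (π_1 ∪ ⋯ ∪ π_{i−1}) for 3 ≤ i ≤ n+1, is a nice partition of 𝒜_{Δ_{n,1}}. -/

import Mathlib

open Finset

/-- The linear form `∑_{i ∈ I} x_i` on `ℚ^n`. -/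
noncomputable def linForm {n : ℕ} (I : Finset (Fin n)) : (Fin n → ℚ) →ₗ[ℚ] ℚ :=
  ∑ i ∈ I, LinearMap.proj i

/-- `I` is a nonempty subset of vertices inducing a connected subgraph of `G`. -/
def ConnSet {n : ℕ} (G : SimpleGraph (Fin n)) (I : Finset (Fin n)) : Prop :=
  I.Nonempty ∧ (G.induce (↑I : Set (Fin n))).Connected

/-- The connected subgraph arrangement of `G`, as a set of hyperplanes of `ℚ^n`. -/
def csa {n : ℕ} (G : SimpleGraph (Fin n)) : Set (Submodule ℚ (Fin n → ℚ)) :=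
  {H | ∃ I : Finset (Fin n), ConnSet G I ∧ H = LinearMap.ker (linForm I)}

/-- The almost path graph `A_{n,k}` (paper notation, vertices `1,…,n+1` realized as
`Fin (n+1)` with `0,…,n`): a path `1–⋯–n` together with the edge `{k, n+1}`. -/
def almostPath (n k : ℕ) : SimpleGraph (Fin (n + 1)) :=
  SimpleGraph.fromRel (fun a b =>
    (a.val + 1 = b.val ∧ b.val < n) ∨ (a.val = k - 1 ∧ b.val = n))

/-- The path-with-triangle graph `Δ_{n,k}` (paper notation): a path `1–⋯–n` together
with the edges `{k, n+1}` and `{k+1, n+1}`. -/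
def pathTriangle (n k : ℕ) : SimpleGraph (Fin (n + 1)) :=
  SimpleGraph.fromRel (fun a b =>
    (a.val + 1 = b.val ∧ b.val < n) ∨ (a.val = k - 1 ∧ b.val = n) ∨ (a.val = k ∧ b.val = n))

/-- The module of `𝒜_G`-derivations `D(𝒜_G) ⊆ Der_ℚ(ℚ[x_1,…,x_n])`. -/
noncomputable def derModule {n : ℕ} (G : SimpleGraph (Fin n)) :
    Submodule (MvPolynomial (Fin n) ℚ)
      (Derivation ℚ (MvPolynomial (Fin n) ℚ) (MvPolynomial (Fin n) ℚ)) where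
  carrier := {θ | ∀ I : Finset (Fin n), ConnSet G I →
    (∑ i ∈ I, MvPolynomial.X i) ∣ θ (∑ i ∈ I, MvPolynomial.X i)}
  add_mem' := by
    intro a b ha hb I hI
    rw [Derivation.add_apply]
    exact dvd_add (ha I hI) (hb I hI)
  zero_mem' := by
    intro I hI
    simp
  smul_mem' := by
    intro c θ hθ I hI
    rw [Derivation.smul_apply, smul_eq_mul]
    exact (hθ I hI).mul_left c

open Classical in
/-- The defining linear forms of the connected subgraph arrangement of `G`
(each hyperplane `H_I ∈ 𝒜_G` corresponds to its defining form `∑_{i∈I} x_i`;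
this correspondence is bijective for 0/1-arrangements). -/
noncomputable def csaForms {n : ℕ} (G : SimpleGraph (Fin n)) :
    Finset ((Fin n → ℚ) →ₗ[ℚ] ℚ) :=
  (Finset.univ.filter fun I : Finset (Fin n) => ConnSet G I).image linForm

/-- Membership in the intersection lattice `L(𝒜)` of the arrangement with defining
forms `F`: the intersections `⋂_{f ∈ B} ker f` over subsets `B ⊆ F` (with the ambient
space as the empty intersection). -/
def InLattice {n : ℕ} (F : Finset ((Fin n → ℚ) →ₗ[ℚ] ℚ))
    (X : Submodule ℚ (Fin n → ℚ)) : Prop :=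
  ∃ B ⊆ F, X = ⨅ f ∈ B, LinearMap.ker f

/-- `π` is a nice partition (a factorization) of the arrangement with (pairwise
distinct) defining forms `F`: it is a partition of `F` into `s` nonempty blocks which
is independent (any choice of one form from each block is linearly independent), and
for every `X ∈ L(𝒜) ∖ {ambient space}` the induced partition of the localization
`𝒜_X = {f ∈ F : X ⊆ ker f}` admits a singleton block. -/
def IsNicePartition {n s : ℕ} (F : Finset ((Fin n → ℚ) →ₗ[ℚ] ℚ))
    (π : Fin s → Finset ((Fin n → ℚ) →ₗ[ℚ] ℚ)) : Prop :=
  (∀ i, (π i).Nonempty) ∧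
  (∀ i, π i ⊆ F) ∧
  (∀ f ∈ F, ∃! i, f ∈ π i) ∧
  (∀ g : Fin s → ((Fin n → ℚ) →ₗ[ℚ] ℚ), (∀ i, g i ∈ π i) → LinearIndependent ℚ g) ∧
  (∀ X : Submodule ℚ (Fin n → ℚ), InLattice F X → X ≠ ⊤ →
    ∃ i, ∃ f ∈ π i, X ≤ LinearMap.ker f ∧
      ∀ g ∈ π i, X ≤ LinearMap.ker g → g = f)

/-- An arrangement (given by its defining forms `F`) is factored if it admits a nice
partition. -/
def IsFactored {n : ℕ} (F : Finset ((Fin n → ℚ) →ₗ[ℚ] ℚ)) : Prop :=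
  ∃ (s : ℕ) (π : Fin s → Finset ((Fin n → ℚ) →ₗ[ℚ] ℚ)), IsNicePartition F π

/-- The vertex set `{1,…,m}` of the paper (0-based: `{0,…,m−1}`) inside `Fin (n+1)`. -/
def initSeg (n m : ℕ) : Finset (Fin (n + 1)) :=
  Finset.univ.filter fun v => v.val < m

open Classical in
/-- The forms of the hyperplanes `H_X ∈ 𝒜_{Δ_{n,1}}` with `X ∩ {i,…,n} = ∅` (paper
1-based indexing: a vertex `v ∈ [n+1]` of the paper is `v − 1` in `Fin (n+1)`). -/
noncomputable def condSet (n i : ℕ) : Finset ((Fin (n + 1) → ℚ) →ₗ[ℚ] ℚ) :=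
  ((Finset.univ.filter fun X : Finset (Fin (n + 1)) => ConnSet (pathTriangle n 1) X).filter
    fun X => ∀ v ∈ X, v.val + 1 < i ∨ v.val = n).image linForm

open Classical in
/-- The blocks `π_1, …, π_{n+1}` (paper indexing; `blockP n 0 = ∅` is junk) of the
partition of `𝒜_{Δ_{n,1}}` from the paper:
`π₁ = {H_{{1,n+1}}}`, `π₂ = {H_{{n+1}}, H_{{1}}, H_{{1,2}}, …, H_{{1,…,n}}}`, and
`π_i = {H_X : X ∩ {i,…,n} = ∅} ∖ (π₁ ∪ ⋯ ∪ π_{i−1})` for `3 ≤ i ≤ n+1`. -/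
noncomputable def blockP (n : ℕ) : ℕ → Finset ((Fin (n + 1) → ℚ) →ₗ[ℚ] ℚ)
  | 0 => ∅
  | 1 => {linForm {0, Fin.last n}}
  | 2 => insert (linForm ({Fin.last n} : Finset (Fin (n + 1))))
      ((Finset.range n).image fun m => linForm (initSeg n (m + 1)))
  | (i + 3) => condSet n (i + 3) \
      ((Finset.range (i + 3)).attach.biUnion fun j => blockP n j.val)
  decreasing_by exact Finset.mem_range.mp j.2

/-!
The connected vertex sets of `Δ_{n,1}` are the path segments `{p, …, q-1}` and the apex together
with `{0, …, q-1}` or `{1, …, q-1}`. In terms of the prefix sums `a_q = x₀ + ⋯ + x_{q-1}` of the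
path coordinates and the apex coordinate `τ`, their forms are `a_q - a_p`, `a_q - (a_0 - τ)` and
`a_q - (a_1 - τ)`: each hyperplane says that a top label `a_q` equals a lower label, and for
`q ≥ 2` the block `π_{q+1}` pairs `a_q` with the lower labels `a_1, …, a_{q-1}, a_0 - τ, a_1 - τ`.

Independence: if one form of each block vanishes at `x`, induction on `q` gives
`a_q ∈ {-τ, -2τ}` for `q ≥ 1`, and the form chosen from `π_2` then forces `τ = 0`, hence `x = 0`.

Singleton blocks: restricted to a flat `X`, a form vanishes iff its two labels agree on `X`. If the
least block meeting `𝒜_X` is some `π_{q+1}` with `q ≥ 2`, two of its members would identify two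
lower labels, which is a hyperplane of an earlier block. `π_1` is a singleton; when the least block
meeting `𝒜_X` is `π_2`, a singleton block is found among `π_2`, `π_{q₁+1}` and `π_{q₂+1}`, where
`q₁ < q₂` are the first indices `q ≥ 1` with `a_q = a_0` on `X`.
-/

section General

theorem SimpleGraph.Reachable.of_adj_closed {V : Type*} {G : SimpleGraph V} (P : V → Prop)
    (hP : ∀ u v, G.Adj u v → P u → P v) {u v : V} (huv : G.Reachable u v) (hu : P u) : P v := by
  obtain ⟨w⟩ := huv
  induction w with
  | nil => exact hu
  | cons hadj _ ih => exact ih (hP _ _ hadj hu)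

theorem SimpleGraph.induce_singleton_connected {V : Type*} (G : SimpleGraph V) (v : V) :
    (G.induce {v}).Connected :=
  SimpleGraph.Connected.of_subsingleton

theorem linearIndependent_of_forall_apply_eq_zero {K V ι : Type*} [Field K] [AddCommGroup V]
    [Module K V] [FiniteDimensional K V] [Fintype ι] {g : ι → Module.Dual K V}
    (hcard : Fintype.card ι = Module.finrank K V) (h : ∀ x, (∀ i, g i x = 0) → x = 0) :
    LinearIndependent K g := by
  refine linearIndependent_of_top_le_span_of_card_eq_finrank ?_
    (hcard.trans Subspace.dual_finrank_eq.symm)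
  have hbot : (Submodule.span K (Set.range g)).dualCoannihilator = ⊥ := by
    rw [eq_bot_iff]
    intro x hx
    rw [← SetLike.mem_coe, Submodule.coe_dualCoannihilator_span] at hx
    exact h x fun i => hx _ (Set.mem_range_self i)
  rw [← Subspace.dualCoannihilator_dualAnnihilator_eq (W := Submodule.span K (Set.range g)), hbot,
    Submodule.dualAnnihilator_bot]

variable {m : ℕ}

theorem linForm_apply (I : Finset (Fin m)) (x : Fin m → ℚ) : linForm I x = ∑ i ∈ I, x i := by
  simp [linForm]

theorem linForm_injective : Function.Injective (linForm (n := m)) := by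
  intro I J h
  ext j
  have hj := LinearMap.congr_fun h (Pi.single j 1)
  simp only [linForm_apply, Pi.single_apply, sum_ite_eq', apply_ite] at hj
  split_ifs at hj <;> simp_all

theorem linForm_union {I J : Finset (Fin m)} (h : Disjoint I J) :
    linForm (I ∪ J) = linForm I + linForm J := by
  simp only [linForm, sum_union h]

theorem linForm_singleton (i : Fin m) : linForm {i} = LinearMap.proj i := by
  simp [linForm]

end General

namespace PathTriangle

variable {n : ℕ}

def pathSeg (n p q : ℕ) : Finset (Fin (n + 1)) :=
  univ.filter fun v => p ≤ v.val ∧ v.val < q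

@[simp]
theorem mem_pathSeg {p q : ℕ} {v : Fin (n + 1)} : v ∈ pathSeg n p q ↔ p ≤ v.val ∧ v.val < q := by
  simp [pathSeg]

theorem last_notMem_pathSeg {p q : ℕ} (hq : q ≤ n) : Fin.last n ∉ pathSeg n p q := by
  simp only [mem_pathSeg, Fin.val_last]
  omega

theorem linForm_pathSeg {p q : ℕ} (hpq : p ≤ q) :
    linForm (pathSeg n p q) = linForm (pathSeg n 0 q) - linForm (pathSeg n 0 p) := by
  have hunion : pathSeg n 0 p ∪ pathSeg n p q = pathSeg n 0 q := by
    ext v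
    simp only [mem_union, mem_pathSeg]
    omega
  have hdisj : Disjoint (pathSeg n 0 p) (pathSeg n p q) := by
    rw [disjoint_left]
    intro v
    simp only [mem_pathSeg]
    omega
  rw [← hunion, linForm_union hdisj, add_sub_cancel_left]

theorem pathSeg_inj {p q p' q' : ℕ} (hpq : p ≤ q) (hpq' : p' ≤ q') (hq : q ≤ n) (hq' : q' ≤ n)
    (h : pathSeg n p q = pathSeg n p' q') : q ≤ p ∧ q' ≤ p' ∨ p = p' ∧ q = q' := by
  simp only [Finset.ext_iff, mem_pathSeg] at h
  have h1 := h ⟨p, by omega⟩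
  have h2 := h ⟨p', by omega⟩
  have h3 := h ⟨q - 1, by omega⟩
  have h4 := h ⟨q' - 1, by omega⟩
  simp only at h1 h2 h3 h4
  omega

/-- The connected vertex sets of `Δ_{n,1}` (apex `n`, path `0, …, n-1`): `seg p q` is the path
segment `{p, …, q-1}` and `apex p q` is that segment together with the apex. -/
inductive Shape
  | seg (p q : ℕ)
  | apex (p q : ℕ)

namespace Shape

def toFinset (n : ℕ) : Shape → Finset (Fin (n + 1))
  | seg p q => pathSeg n p q
  | apex p q => insert (Fin.last n) (pathSeg n p q)

def Valid (n : ℕ) : Shape → Prop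
  | seg p q => p < q ∧ q ≤ n
  | apex p q => q ≤ n ∧ (p = 0 ∨ p = 1 ∧ 2 ≤ q)

def top : Shape → ℕ
  | seg _ q | apex _ q => q

/-- The index `b` of the block `π_{b+1}` of the paper's partition containing the shape. -/
def block : Shape → ℕ
  | seg p q => if p = 0 then 1 else q
  | apex _ q => if q ≤ 1 then 1 - q else q

noncomputable def form (n : ℕ) (σ : Shape) : (Fin (n + 1) → ℚ) →ₗ[ℚ] ℚ :=
  linForm (σ.toFinset n)

section Labels
variable {α : Type*} (a c : ℕ → α)

def low : Shape → α
  | seg p _ => a p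
  | apex p _ => c p

/-- `c p` stands for the shifted label `a p - τ` (see `eval_eq_zero_iff`). -/
def Vanishes (σ : Shape) : Prop :=
  σ.low a c = a σ.top

@[simp]
theorem vanishes_seg {p q : ℕ} : (seg p q).Vanishes a c ↔ a p = a q := Iff.rfl

@[simp]
theorem vanishes_apex {p q : ℕ} : (apex p q).Vanishes a c ↔ c p = a q := Iff.rfl

end Labels

/-- With `a q = x₀ + ⋯ + x_{q-1}` and `τ = xₙ`, this is the defining form of `σ`
(`form_eq_eval`). -/
def eval {V : Type*} [AddCommGroup V] (a : ℕ → V) (τ : V) (σ : Shape) : V :=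
  a σ.top - σ.low a (fun p => a p - τ)

theorem eval_eq_zero_iff {V : Type*} [AddCommGroup V] {a : ℕ → V} {τ : V} {σ : Shape} :
    σ.eval a τ = 0 ↔ σ.Vanishes a (fun p => a p - τ) := by
  rw [eval, sub_eq_zero, Vanishes, eq_comm]

theorem map_eval {V W F : Type*} [AddCommGroup V] [AddCommGroup W] [FunLike F V W]
    [AddMonoidHomClass F V W] (φ : F) (a : ℕ → V) (τ : V) (σ : Shape) :
    φ (σ.eval a τ) = σ.eval (φ ∘ a) (φ τ) := by
  cases σ <;> simp [eval, low, map_sub]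

theorem form_eq_eval {σ : Shape} (hσ : σ.Valid n) :
    σ.form n = σ.eval (fun q => linForm (pathSeg n 0 q)) (LinearMap.proj (Fin.last n)) := by
  cases σ with
  | seg p q => exact linForm_pathSeg hσ.1.le
  | apex p q =>
    obtain ⟨hq, hp⟩ := hσ
    rw [form, toFinset, insert_eq, linForm_union (disjoint_singleton_left.mpr
      (last_notMem_pathSeg hq)), linForm_singleton, linForm_pathSeg (by omega)]
    simp only [eval, top, low]
    abel

theorem top_le {σ : Shape} (hσ : σ.Valid n) : σ.top ≤ n := by
  cases σ
  exacts [hσ.2, hσ.1]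

theorem block_le {σ : Shape} (hσ : σ.Valid n) (hn : 1 ≤ n) : σ.block ≤ n := by
  cases σ <;> simp only [block] <;> split_ifs <;> simp only [Valid] at hσ <;> omega

theorem top_eq_block {σ : Shape} (hσ : σ.Valid n) (h : 2 ≤ σ.block) : σ.top = σ.block := by
  cases σ <;> simp only [block, top] at h ⊢ <;> split_ifs at h ⊢ <;> omega

theorem block_eq_zero {σ : Shape} (hσ : σ.Valid n) (h : σ.block = 0) : σ = apex 0 1 := by
  cases σ with
  | seg p q =>
    simp only [block] at h
    split_ifs at h
    have := hσ.1
    omega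
  | apex p q =>
    obtain ⟨hq, hp⟩ := hσ
    simp only [block] at h
    split_ifs at h
    · congr 1 <;> omega
    · omega

theorem block_eq_one {σ : Shape} (hσ : σ.Valid n) (h : σ.block = 1) :
    σ = apex 0 0 ∨ ∃ q, 1 ≤ q ∧ σ = seg 0 q := by
  cases σ with
  | seg p q =>
    simp only [block] at h
    split_ifs at h with hp
    · exact Or.inr ⟨q, by have := hσ.1; omega, by rw [hp]⟩
    · have := hσ.1
      omega
  | apex p q =>
    obtain ⟨hq, hp⟩ := hσ
    simp only [block] at h
    split_ifs at h
    · left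
      congr 1 <;> omega
    · omega

theorem block_eq_of_two_le {σ : Shape} (hσ : σ.Valid n) {b : ℕ} (hb : σ.block = b) (h2 : 2 ≤ b) :
    (∃ p, 1 ≤ p ∧ p < b ∧ σ = seg p b) ∨ σ = apex 0 b ∨ σ = apex 1 b := by
  cases σ with
  | seg p q =>
    simp only [block] at hb
    split_ifs at hb with hp
    · omega
    · exact Or.inl ⟨p, by omega, by have := hσ.1; omega, by rw [hb]⟩
  | apex p q =>
    obtain ⟨hq, hp⟩ := hσ
    simp only [block] at hb
    split_ifs at hb
    · omega
    · subst hb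
      rcases hp with rfl | ⟨rfl, -⟩ <;> simp

theorem last_mem_toFinset_iff {σ : Shape} (hσ : σ.Valid n) :
    Fin.last n ∈ σ.toFinset n ↔ ∃ p q, σ = apex p q := by
  cases σ with
  | seg p q => simpa [toFinset] using last_notMem_pathSeg hσ.2
  | apex p q => simp [toFinset]

theorem toFinset_injOn {σ ρ : Shape} (hσ : σ.Valid n) (hρ : ρ.Valid n)
    (h : σ.toFinset n = ρ.toFinset n) : σ = ρ := by
  have hlast := (last_mem_toFinset_iff hσ).symm.trans (h ▸ last_mem_toFinset_iff hρ)
  cases σ with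
  | seg p q =>
    cases ρ with
    | seg p' q' =>
      obtain ⟨hpq, hq⟩ := hσ
      obtain ⟨hpq', hq'⟩ := hρ
      have := pathSeg_inj hpq.le hpq'.le hq hq' h
      congr 1 <;> omega
    | apex p' q' => simp at hlast
  | apex p q =>
    cases ρ with
    | seg p' q' => simp at hlast
    | apex p' q' =>
      obtain ⟨hq, hp⟩ := hσ
      obtain ⟨hq', hp'⟩ := hρ
      have hseg : pathSeg n p q = pathSeg n p' q' := by
        rw [← erase_insert (last_notMem_pathSeg hq), ← erase_insert (last_notMem_pathSeg hq')]
        exact congrArg (·.erase (Fin.last n)) h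
      have := pathSeg_inj (by omega) (by omega) hq hq' hseg
      congr 1 <;> omega

theorem form_injOn {σ ρ : Shape} (hσ : σ.Valid n) (hρ : ρ.Valid n)
    (h : σ.form n = ρ.form n) : σ = ρ :=
  toFinset_injOn hσ hρ (linForm_injective h)

theorem forall_mem_toFinset_iff_top_lt {σ : Shape} (hσ : σ.Valid n) {i : ℕ} (hi : 1 ≤ i) :
    (∀ v ∈ σ.toFinset n, v.val + 1 < i ∨ v.val = n) ↔ σ.top < i := by
  have hseg {p q : ℕ} (hpq : p ≤ q) (hq : q ≤ n) :
      (∀ v ∈ pathSeg n p q, v.val + 1 < i ∨ v.val = n) ↔ q ≤ p ∨ q < i := by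
    simp only [mem_pathSeg]
    refine ⟨fun h => ?_, fun h v hv => by omega⟩
    by_contra! hc
    have := h ⟨q - 1, by omega⟩ (by simp only; omega)
    simp only at this
    omega
  cases σ with
  | seg p q =>
    rw [toFinset, hseg hσ.1.le hσ.2, top]
    have := hσ.1
    omega
  | apex p q =>
    obtain ⟨hq, hp⟩ := hσ
    rw [toFinset, forall_mem_insert, hseg (by omega) hq, top, Fin.val_last]
    omega

end Shape

open Shape SimpleGraph

section Graph

theorem pathTriangle_adj {u v : Fin (n + 1)} :
    (pathTriangle n 1).Adj u v ↔ u ≠ v ∧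
      (u.val + 1 = v.val ∧ v.val < n ∨ v.val + 1 = u.val ∧ u.val < n ∨
        u.val ≤ 1 ∧ v.val = n ∨ v.val ≤ 1 ∧ u.val = n) := by
  rw [pathTriangle, fromRel_adj]
  constructor <;> rintro ⟨hne, h⟩ <;> exact ⟨hne, by omega⟩

theorem connSet_pathSeg {p q : ℕ} (hpq : p < q) (hq : q ≤ n) :
    ConnSet (pathTriangle n 1) (pathSeg n p q) := by
  refine ⟨⟨⟨p, by omega⟩, by simp [hpq]⟩, ?_⟩
  induction q, hpq using Nat.le_induction with
  | base =>
    have : pathSeg n p (p + 1) = {⟨p, by omega⟩} := by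
      ext v
      simp only [mem_pathSeg, Order.lt_add_one_iff, mem_singleton, Fin.ext_iff]
      omega
    rw [this, coe_singleton]
    exact induce_singleton_connected _ _
  | succ q hpq ih =>
    have : pathSeg n p (q + 1) = pathSeg n p q ∪ {⟨q, by omega⟩} := by
      ext v
      simp only [mem_pathSeg, Order.lt_add_one_iff, union_singleton, mem_insert, Fin.ext_iff]
      omega
    rw [this, coe_union, coe_singleton]
    refine connected_induce_union (v := ⟨q - 1, by omega⟩) (ih (by omega)).preconnected
      (induce_singleton_connected _ _).preconnected
      (by simp only [SetLike.mem_coe, mem_pathSeg]; omega) rfl ?_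
    rw [pathTriangle_adj]
    simp only [ne_eq, Fin.ext_iff]
    omega

theorem connSet_toFinset {σ : Shape} (hσ : σ.Valid n) :
    ConnSet (pathTriangle n 1) (σ.toFinset n) := by
  cases σ with
  | seg p q => exact connSet_pathSeg hσ.1 hσ.2
  | apex p q =>
    obtain ⟨hq, hp⟩ := hσ
    refine ⟨insert_nonempty _ _, ?_⟩
    rw [Shape.toFinset, coe_insert, Set.insert_eq]
    rcases Nat.lt_or_ge p q with hpq | hqp
    · refine connected_induce_union (w := ⟨p, by omega⟩)
        (induce_singleton_connected _ _).preconnected (connSet_pathSeg hpq hq).2.preconnected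
        rfl (by simp only [SetLike.mem_coe, mem_pathSeg]; omega) ?_
      rw [pathTriangle_adj]
      simp only [ne_eq, Fin.ext_iff, Fin.val_last, lt_self_iff_false, and_false, and_true, false_or]
      omega
    · have : (pathSeg n p q : Set (Fin (n + 1))) = ∅ := by
        ext v
        simp only [SetLike.mem_coe, mem_pathSeg, Set.mem_empty_iff_false, iff_false]
        omega
      rw [this, Set.union_empty]
      exact induce_singleton_connected _ _

theorem mem_of_connSet_of_lt_of_le {I : Finset (Fin (n + 1))} (hI : ConnSet (pathTriangle n 1) I)
    {a b w : Fin (n + 1)} (ha : a ∈ I) (hb : b ∈ I) (haw : a < w) (hwb : w ≤ b)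
    (hbn : b.val < n) : w ∈ I := by
  -- if `w ∉ I`, then `{v | w ≤ v < n}` is closed under adjacency in `I`, as the apex only
  -- touches `0` and `1`
  by_contra hw
  have key := Reachable.of_adj_closed (G := (pathTriangle n 1).induce I)
    (fun v => w ≤ v.val ∧ v.val.val < n) ?_ (hI.2.preconnected ⟨b, hb⟩ ⟨a, ha⟩) ⟨hwb, hbn⟩
  · exact absurd key.1 (not_le.mpr haw)
  · rintro ⟨u, hu⟩ ⟨v, hv⟩ huv ⟨hwu, hun⟩
    have hne : u.val ≠ w.val := fun h => hw (Fin.ext h ▸ hu)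
    simp only [comap_adj, Function.Embedding.coe_subtype, pathTriangle_adj] at huv
    simp only [Fin.le_def] at hwu hun ⊢
    omega

theorem exists_mem_val_le_one {I : Finset (Fin (n + 1))} (hI : ConnSet (pathTriangle n 1) I)
    (hlast : Fin.last n ∈ I) {u : Fin (n + 1)} (hu : u ∈ I) (hun : u.val < n) :
    ∃ v ∈ I, v.val ≤ 1 ∧ v.val < n := by
  by_contra! h
  have key := Reachable.of_adj_closed (G := (pathTriangle n 1).induce I)
    (fun v => v.val.val < n) ?_ (hI.2.preconnected ⟨u, hu⟩ ⟨_, hlast⟩) hun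
  · simp at key
  · rintro ⟨x, hx⟩ ⟨y, hy⟩ hxy hxn
    have := h x hx
    simp only [comap_adj, Function.Embedding.coe_subtype, pathTriangle_adj] at hxy
    simp only at hxn ⊢
    omega

theorem filter_val_lt_eq_pathSeg {I : Finset (Fin (n + 1))} (hI : ConnSet (pathTriangle n 1) I)
    (hJ : (I.filter fun v => v.val < n).Nonempty) :
    ∃ p q, p < q ∧ q ≤ n ∧ I.filter (fun v => v.val < n) = pathSeg n p q := by
  set J := I.filter fun v => v.val < n
  set a := J.min' hJ
  set b := J.max' hJ
  obtain ⟨haI, -⟩ := mem_filter.mp (J.min'_mem hJ)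
  obtain ⟨hbI, hbn⟩ := mem_filter.mp (J.max'_mem hJ)
  have hab : a.val ≤ b.val := J.min'_le _ (J.max'_mem hJ)
  refine ⟨a, b + 1, by omega, by omega, ?_⟩
  ext v
  simp only [J, mem_filter, mem_pathSeg]
  constructor
  · intro hv
    have := J.min'_le v (mem_filter.mpr hv)
    have := J.le_max' v (mem_filter.mpr hv)
    simp only [Fin.le_def] at *
    omega
  · rintro ⟨h1, h2⟩
    refine ⟨?_, by omega⟩
    rcases (Fin.le_def.mpr h1).eq_or_lt with h | h
    · exact h ▸ haI
    · exact mem_of_connSet_of_lt_of_le hI haI hbI h (Fin.le_def.mpr (by omega)) hbn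

theorem exists_shape_of_connSet {I : Finset (Fin (n + 1))} (hI : ConnSet (pathTriangle n 1) I) :
    ∃ σ : Shape, σ.Valid n ∧ σ.toFinset n = I := by
  have ne_last_iff {v : Fin (n + 1)} : v ≠ Fin.last n ↔ v.val < n := by
    rw [Ne, Fin.ext_iff, Fin.val_last]
    omega
  rcases (I.filter fun v => v.val < n).eq_empty_or_nonempty with hJe | hJne
  · refine ⟨apex 0 0, ⟨by omega, Or.inl rfl⟩, ?_⟩
    obtain ⟨v, hv⟩ := hI.1
    have hlast : ∀ x ∈ I, x = Fin.last n := fun x hx => by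
      by_contra hx'
      exact (eq_empty_iff_forall_notMem.mp hJe) x (mem_filter.mpr ⟨hx, ne_last_iff.mp hx'⟩)
    ext w
    simp only [Shape.toFinset, mem_insert, mem_pathSeg, Nat.not_lt_zero, and_false, or_false]
    exact ⟨fun h => h ▸ hlast v hv ▸ hv, hlast w⟩
  obtain ⟨p, q, hpq, hqn, hJ⟩ := filter_val_lt_eq_pathSeg hI hJne
  have hmem {v : Fin (n + 1)} : v ∈ I ∧ v.val < n ↔ p ≤ v.val ∧ v.val < q := by
    rw [← mem_filter (p := fun v : Fin (n + 1) => v.val < n), hJ, mem_pathSeg]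
  by_cases hlast : Fin.last n ∈ I
  · have hpI := (hmem (v := ⟨p, by omega⟩)).mpr ⟨le_rfl, hpq⟩
    obtain ⟨v, hvI, hv1, hvn⟩ := exists_mem_val_le_one hI hlast hpI.1 hpI.2
    have hpv := (hmem.mp ⟨hvI, hvn⟩).1
    refine ⟨apex p q, ⟨hqn, by omega⟩, ?_⟩
    ext v
    rw [Shape.toFinset, mem_insert, mem_pathSeg, ← hmem]
    by_cases hvl : v = Fin.last n
    · simp [hvl, hlast]
    · simp [hvl, ne_last_iff.mp hvl]
  · refine ⟨seg p q, ⟨hpq, hqn⟩, ?_⟩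
    ext v
    rw [Shape.toFinset, mem_pathSeg, ← hmem, and_iff_left_iff_imp, ← ne_last_iff]
    exact fun hv => ne_of_mem_of_not_mem hv hlast

theorem connSet_iff {I : Finset (Fin (n + 1))} :
    ConnSet (pathTriangle n 1) I ↔ ∃ σ : Shape, σ.Valid n ∧ σ.toFinset n = I :=
  ⟨exists_shape_of_connSet, fun ⟨_, hσ, h⟩ => h ▸ connSet_toFinset hσ⟩

end Graph

section Blocks

theorem mem_csaForms {f : (Fin (n + 1) → ℚ) →ₗ[ℚ] ℚ} :
    f ∈ csaForms (pathTriangle n 1) ↔ ∃ σ : Shape, σ.Valid n ∧ σ.form n = f := by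
  simp only [csaForms, mem_image, mem_filter, mem_univ, true_and, connSet_iff]
  constructor
  · rintro ⟨_, ⟨σ, hσ, rfl⟩, rfl⟩
    exact ⟨σ, hσ, rfl⟩
  · rintro ⟨σ, hσ, rfl⟩
    exact ⟨_, ⟨σ, hσ, rfl⟩, rfl⟩

theorem mem_condSet {i : ℕ} (hi : 1 ≤ i) {f : (Fin (n + 1) → ℚ) →ₗ[ℚ] ℚ} :
    f ∈ condSet n i ↔ ∃ σ : Shape, σ.Valid n ∧ σ.top < i ∧ σ.form n = f := by
  simp only [condSet, mem_image, mem_filter, mem_univ, true_and, connSet_iff]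
  constructor
  · rintro ⟨_, ⟨⟨σ, hσ, rfl⟩, htop⟩, rfl⟩
    exact ⟨σ, hσ, (forall_mem_toFinset_iff_top_lt hσ hi).mp htop, rfl⟩
  · rintro ⟨σ, hσ, htop, rfl⟩
    exact ⟨_, ⟨⟨σ, hσ, rfl⟩, (forall_mem_toFinset_iff_top_lt hσ hi).mpr htop⟩, rfl⟩

theorem mem_blockP_one (hn : 1 ≤ n) {f : (Fin (n + 1) → ℚ) →ₗ[ℚ] ℚ} :
    f ∈ blockP n 1 ↔ ∃ σ : Shape, σ.Valid n ∧ σ.block = 0 ∧ σ.form n = f := by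
  have hσ : (apex 0 1).toFinset n = {0, Fin.last n} := by
    ext v
    simp only [Shape.toFinset, mem_insert, mem_pathSeg, mem_singleton, Fin.ext_iff,
      Fin.val_last, Fin.val_zero]
    omega
  rw [blockP, mem_singleton, ← hσ]
  constructor
  · rintro rfl
    exact ⟨apex 0 1, ⟨hn, Or.inl rfl⟩, rfl, rfl⟩
  · rintro ⟨σ, hσ, hb, rfl⟩
    rw [block_eq_zero hσ hb]
    rfl

theorem mem_blockP_two {f : (Fin (n + 1) → ℚ) →ₗ[ℚ] ℚ} :
    f ∈ blockP n 2 ↔ ∃ σ : Shape, σ.Valid n ∧ σ.block = 1 ∧ σ.form n = f := by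
  have hapex : (apex 0 0).toFinset n = {Fin.last n} := by
    ext v
    simp [Shape.toFinset]
  have hseg (m : ℕ) : initSeg n m = (seg 0 m).toFinset n := by
    ext v
    simp [initSeg, Shape.toFinset]
  simp only [blockP, mem_insert, mem_image, mem_range, ← hapex, hseg]
  constructor
  · rintro (rfl | ⟨m, hm, rfl⟩)
    · exact ⟨apex 0 0, ⟨by omega, Or.inl rfl⟩, rfl, rfl⟩
    · exact ⟨seg 0 (m + 1), ⟨by omega, by omega⟩, rfl, rfl⟩
  · rintro ⟨σ, hσ, hb, rfl⟩
    rcases block_eq_one hσ hb with rfl | ⟨q, hq, rfl⟩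
    · exact Or.inl rfl
    · exact Or.inr ⟨q - 1, by have := hσ.2; omega, by rw [Nat.sub_add_cancel hq]; rfl⟩

open Classical in
theorem mem_blockP (hn : 1 ≤ n) (b : ℕ) {f : (Fin (n + 1) → ℚ) →ₗ[ℚ] ℚ} :
    f ∈ blockP n (b + 1) ↔ ∃ σ : Shape, σ.Valid n ∧ σ.block = b ∧ σ.form n = f := by
  induction b using Nat.strong_induction_on generalizing f with
  | _ b ih =>
  match b with
  | 0 => exact mem_blockP_one hn
  | 1 => exact mem_blockP_two
  | i + 2 =>
    have earlier : (∃ j, j < i + 3 ∧ f ∈ blockP n j) ↔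
        ∃ σ : Shape, σ.Valid n ∧ σ.block < i + 2 ∧ σ.form n = f := by
      constructor
      · rintro ⟨_ | j, hj, hf⟩
        · simp [blockP] at hf
        · obtain ⟨σ, hσ, hb, rfl⟩ := (ih j (by omega)).mp hf
          exact ⟨σ, hσ, by omega, rfl⟩
      · rintro ⟨σ, hσ, hb, rfl⟩
        exact ⟨σ.block + 1, by omega, (ih _ hb).mpr ⟨σ, hσ, rfl, rfl⟩⟩
    rw [show i + 2 + 1 = i + 3 from rfl, blockP, mem_sdiff, mem_condSet (by omega)]
    simp only [mem_biUnion, mem_attach, true_and, Subtype.exists, mem_range, exists_prop, earlier]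
    -- valid shapes of block `≥ 2` have `block = top`
    constructor
    · rintro ⟨⟨σ, hσ, htop, rfl⟩, hnot⟩
      have hb : i + 2 ≤ σ.block := by
        by_contra h
        exact hnot ⟨σ, hσ, by omega, rfl⟩
      exact ⟨σ, hσ, by have := top_eq_block hσ (by omega); omega, rfl⟩
    · rintro ⟨σ, hσ, hb, rfl⟩
      refine ⟨⟨σ, hσ, by have := top_eq_block hσ (by omega); omega, rfl⟩, ?_⟩
      rintro ⟨ρ, hρ, hρb, hform⟩
      obtain rfl := form_injOn hρ hσ hform
      omega

end Blocks

section Vanishing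
variable {α : Type*} {a c : ℕ → α}

def Shape.VanishesAlone (n : ℕ) (a c : ℕ → α) (σ : Shape) : Prop :=
  σ.Valid n ∧ σ.Vanishes a c ∧ ∀ ρ : Shape, ρ.Valid n → ρ.Vanishes a c → ρ.block = σ.block → ρ = σ

theorem exists_vanishes_block_lt_of_apex_eq {r p b : ℕ} (hc0 : c 0 = a 0 ↔ c 1 = a 1)
    (hr : r ≤ 1) (hp : 1 ≤ p) (hpb : p < b) (hbn : b ≤ n) (h : c r = a p) :
    ∃ κ : Shape, κ.Valid n ∧ κ.Vanishes a c ∧ κ.block < b := by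
  rcases Nat.lt_or_ge p 2 with hp2 | hp2
  · obtain rfl : p = 1 := by omega
    rcases Nat.le_one_iff_eq_zero_or_eq_one.mp hr with rfl | rfl
    · refine ⟨apex 0 1, ⟨by omega, Or.inl rfl⟩, h, ?_⟩
      simp only [block, le_refl, ↓reduceIte, tsub_self]
      omega
    · refine ⟨apex 0 0, ⟨by omega, Or.inl rfl⟩, hc0.mpr h, ?_⟩
      simp only [block, zero_le, ↓reduceIte, tsub_zero]
      omega
  · refine ⟨apex r p, ⟨by omega, by omega⟩, h, ?_⟩
    simp only [block]
    split_ifs <;> omega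

theorem exists_vanishes_block_lt (hc0 : c 0 = a 0 ↔ c 1 = a 1) (hc1 : c 0 = c 1 ↔ a 0 = a 1)
    {σ ρ : Shape} (hσ : σ.Valid n) (hρ : ρ.Valid n) (hσv : σ.Vanishes a c)
    (hρv : ρ.Vanishes a c) (hb : ρ.block = σ.block) (h2 : 2 ≤ σ.block) (hne : ρ ≠ σ) :
    ∃ κ : Shape, κ.Valid n ∧ κ.Vanishes a c ∧ κ.block < σ.block := by
  have hbn : σ.block ≤ n := top_eq_block hσ h2 ▸ top_le hσ
  generalize hσb : σ.block = b at hb h2 hbn ⊢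
  rcases block_eq_of_two_le hσ hσb h2 with ⟨p, hp1, hpb, rfl⟩ | rfl | rfl <;>
    rcases block_eq_of_two_le hρ hb h2 with ⟨p', hp1', hpb', rfl⟩ | rfl | rfl <;>
    simp only [vanishes_seg, vanishes_apex, ne_eq, seg.injEq, apex.injEq, and_true,
      not_true_eq_false] at hσv hρv hne
  · rcases Nat.lt_or_gt_of_ne hne with h | h
    · refine ⟨seg p' p, ⟨h, by omega⟩, hρv.trans hσv.symm, ?_⟩
      simp only [block]
      split_ifs <;> omega
    · refine ⟨seg p p', ⟨h, by omega⟩, hσv.trans hρv.symm, ?_⟩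
      simp only [block]
      split_ifs <;> omega
  · exact exists_vanishes_block_lt_of_apex_eq hc0 (by omega) hp1 hpb hbn (hρv.trans hσv.symm)
  · exact exists_vanishes_block_lt_of_apex_eq hc0 (by omega) hp1 hpb hbn (hρv.trans hσv.symm)
  · exact exists_vanishes_block_lt_of_apex_eq hc0 (by omega) hp1' hpb' hbn (hσv.trans hρv.symm)
  · exact ⟨seg 0 1, ⟨by omega, by omega⟩, hc1.mp (hσv.trans hρv.symm),
      by simp only [block, ↓reduceIte]; omega⟩
  · exact exists_vanishes_block_lt_of_apex_eq hc0 (by omega) hp1' hpb' hbn (hσv.trans hρv.symm)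
  · exact ⟨seg 0 1, ⟨by omega, by omega⟩, hc1.mp (hρv.trans hσv.symm),
      by simp only [block, ↓reduceIte]; omega⟩

theorem exists_seg_vanishesAlone {q₁ : ℕ} (hq₁ : 1 ≤ q₁) (hq₁n : q₁ ≤ n) (hq₁a : a q₁ = a 0)
    (hmin : ∀ p, 1 ≤ p → p < q₁ → a p ≠ a 0) (hc0a : c 0 ≠ a 0) (hc1a : c 1 ≠ a 0) :
    ∃ σ : Shape, σ.VanishesAlone n a c := by
  classical
  by_cases hZ : ∃ q, q₁ < q ∧ q ≤ n ∧ a q = a 0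
  · obtain ⟨hq₁₂, hq₂n, hq₂a⟩ := Nat.find_spec hZ
    have hmin₂ (p : ℕ) (hp : q₁ < p) (hpq : p < Nat.find hZ) : a p ≠ a 0 :=
      fun ha => Nat.find_min hZ hpq ⟨hp, by omega, ha⟩
    set q₂ := Nat.find hZ
    refine ⟨seg q₁ q₂, ⟨hq₁₂, hq₂n⟩, hq₁a.trans hq₂a.symm, fun ρ hρ hρv hb => ?_⟩
    have hb' : (seg q₁ q₂).block = q₂ := by simp only [block, ite_eq_right_iff]; omega
    rcases block_eq_of_two_le hρ (hb.trans hb') (by omega) with ⟨p, hp1, hpq, rfl⟩ | rfl | rfl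
    · have hpa : a p = a 0 := hρv.trans hq₂a
      congr 1
      by_contra hne
      rcases Nat.lt_or_gt_of_ne hne with h | h
      exacts [hmin p hp1 h hpa, hmin₂ p h hpq hpa]
    · exact absurd (hρv.trans hq₂a) hc0a
    · exact absurd (hρv.trans hq₂a) hc1a
  · refine ⟨seg 0 q₁, ⟨hq₁, hq₁n⟩, hq₁a.symm, fun ρ hρ hρv hb => ?_⟩
    rcases block_eq_one hρ (hb.trans (by simp [block])) with rfl | ⟨q, hq, rfl⟩
    · exact absurd hρv hc0a
    · rw [vanishes_seg] at hρv
      congr 1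
      by_contra hne
      rcases Nat.lt_or_gt_of_ne hne with h | h
      exacts [hmin q hq h hρv.symm, hZ ⟨q, h, hρ.2, hρv.symm⟩]

theorem exists_vanishesAlone_of_first_eq {q₁ : ℕ} (hq₁ : 1 ≤ q₁) (hq₁n : q₁ ≤ n)
    (hq₁a : a q₁ = a 0) (hmin : ∀ p, 1 ≤ p → p < q₁ → a p ≠ a 0) (hc0 : c 0 = a 0 ↔ c 1 = a 1)
    (h0 : c 0 ≠ a 1) :
    ∃ σ : Shape, σ.VanishesAlone n a c := by
  by_cases hc0a : c 0 = a 0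
  · have h2 : 2 ≤ q₁ := by
      by_contra
      obtain rfl : q₁ = 1 := by omega
      exact h0 (hc0a.trans hq₁a.symm)
    refine ⟨apex 0 q₁, ⟨hq₁n, Or.inl rfl⟩, hc0a.trans hq₁a.symm, fun ρ hρ hρv hb => ?_⟩
    have hb' : (apex 0 q₁).block = q₁ := by simp only [block, ite_eq_right_iff]; omega
    rcases block_eq_of_two_le hρ (hb.trans hb') h2 with ⟨p, hp1, hpq, rfl⟩ | rfl | rfl
    · exact absurd (hρv.trans hq₁a) (hmin p hp1 hpq)
    · rfl
    · exact absurd (hc0a.trans (hq₁a.symm.trans (hρv.symm.trans (hc0.mp hc0a)))) h0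
  by_cases hc1a : c 1 = a 0
  · have h2 : 2 ≤ q₁ := by
      by_contra
      obtain rfl : q₁ = 1 := by omega
      exact hc0a (hc0.mpr (hc1a.trans hq₁a.symm))
    refine ⟨apex 1 q₁, ⟨hq₁n, Or.inr ⟨rfl, h2⟩⟩, hc1a.trans hq₁a.symm, fun ρ hρ hρv hb => ?_⟩
    have hb' : (apex 1 q₁).block = q₁ := by simp only [block, ite_eq_right_iff]; omega
    rcases block_eq_of_two_le hρ (hb.trans hb') h2 with ⟨p, hp1, hpq, rfl⟩ | rfl | rfl
    · exact absurd (hρv.trans hq₁a) (hmin p hp1 hpq)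
    · exact absurd (hρv.trans hq₁a) hc0a
    · rfl
  exact exists_seg_vanishesAlone hq₁ hq₁n hq₁a hmin hc0a hc1a

theorem exists_vanishesAlone_of_block_eq_one (hc0 : c 0 = a 0 ↔ c 1 = a 1) (h0 : c 0 ≠ a 1)
    (hB1 : ∃ σ : Shape, σ.Valid n ∧ σ.Vanishes a c ∧ σ.block = 1) :
    ∃ σ : Shape, σ.VanishesAlone n a c := by
  classical
  by_cases hZ : ∃ q, 1 ≤ q ∧ q ≤ n ∧ a q = a 0
  · obtain ⟨hq₁, hq₁n, hq₁a⟩ := Nat.find_spec hZ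
    exact exists_vanishesAlone_of_first_eq hq₁ hq₁n hq₁a
      (fun p hp hpq ha => Nat.find_min hZ hpq ⟨hp, by omega, ha⟩) hc0 h0
  have hc : c 0 = a 0 := by
    obtain ⟨σ, hσ, hσv, hb⟩ := hB1
    rcases block_eq_one hσ hb with rfl | ⟨q, hq, rfl⟩
    · exact hσv
    · exact absurd ⟨q, hq, hσ.2, hσv.symm⟩ hZ
  refine ⟨apex 0 0, ⟨Nat.zero_le _, Or.inl rfl⟩, hc, fun ρ hρ hρv hb => ?_⟩
  rcases block_eq_one hρ hb with rfl | ⟨q, hq, rfl⟩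
  · rfl
  · exact absurd ⟨q, hq, hρ.2, hρv.symm⟩ hZ

theorem exists_vanishesAlone (hn : 1 ≤ n) (hc0 : c 0 = a 0 ↔ c 1 = a 1)
    (hc1 : c 0 = c 1 ↔ a 0 = a 1) (h : ∃ σ : Shape, σ.Valid n ∧ σ.Vanishes a c) :
    ∃ σ : Shape, σ.VanishesAlone n a c := by
  classical
  by_cases h0 : c 0 = a 1
  · exact ⟨apex 0 1, ⟨hn, Or.inl rfl⟩, h0, fun ρ hρ _ hb => block_eq_zero hρ hb⟩
  by_cases hB1 : ∃ σ : Shape, σ.Valid n ∧ σ.Vanishes a c ∧ σ.block = 1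
  · exact exists_vanishesAlone_of_block_eq_one hc0 h0 hB1
  have hex : ∃ b, ∃ σ : Shape, σ.Valid n ∧ σ.Vanishes a c ∧ σ.block = b :=
    let ⟨σ, hσ, hσv⟩ := h; ⟨_, σ, hσ, hσv, rfl⟩
  obtain ⟨σ, hσ, hσv, hσb⟩ := Nat.find_spec hex
  have h2 : 2 ≤ σ.block := by
    by_contra! hlt
    interval_cases hb : σ.block
    · rw [block_eq_zero hσ hb] at hσv
      exact h0 hσv
    · exact hB1 ⟨σ, hσ, hσv, hb⟩
  refine ⟨σ, hσ, hσv, fun ρ hρ hρv hb => by_contra fun hne => ?_⟩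
  obtain ⟨κ, hκ, hκv, hκb⟩ := exists_vanishes_block_lt hc0 hc1 hσ hρ hσv hρv hb h2 hne
  exact Nat.find_min hex (hσb ▸ hκb) ⟨κ, hκ, hκv, rfl⟩

end Vanishing

section Eval
variable {V : Type*} [AddCommGroup V] {a : ℕ → V} {τ : V}

theorem eq_zero_of_forall_exists_block_eval_eq_zero [IsAddTorsionFree V]
    (h : ∀ b ≤ n, ∃ σ : Shape, σ.Valid n ∧ σ.block = b ∧ σ.eval a τ = 0) :
    τ = 0 ∧ ∀ q ≤ n, a q = a 0 := by
  simp only [eval_eq_zero_iff] at h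
  obtain ⟨σ₀, hσ₀, hb₀, hv₀⟩ := h 0 (Nat.zero_le _)
  obtain rfl := block_eq_zero hσ₀ hb₀
  have h1 : a 1 = a 0 - τ := hv₀.symm
  have hstep (t : ℕ) (ht : 1 ≤ t) (htn : t ≤ n) : a t = a 0 - τ ∨ a t = a 0 - τ - τ := by
    induction t using Nat.strong_induction_on with
    | _ t ih =>
    rcases (by omega : t = 1 ∨ 2 ≤ t) with rfl | ht2
    · exact Or.inl h1
    · obtain ⟨σ, hσ, hb, hv⟩ := h t htn
      rcases block_eq_of_two_le hσ hb ht2 with ⟨p, hp1, hpt, rfl⟩ | rfl | rfl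
      · rw [vanishes_seg] at hv
        rw [← hv]
        exact ih p hpt hp1 (by omega)
      · rw [vanishes_apex] at hv
        exact Or.inl hv.symm
      · rw [vanishes_apex, h1] at hv
        exact Or.inr hv.symm
  have hτ : τ = 0 := by
    obtain ⟨σ₁, hσ₁, hb₁, hv₁⟩ := h 1 hσ₀.1
    rcases block_eq_one hσ₁ hb₁ with rfl | ⟨q, hq, rfl⟩
    · exact sub_eq_self.mp hv₁
    · rw [vanishes_seg] at hv₁
      rcases hstep q hq hσ₁.2 with h' | h'
      · exact sub_eq_self.mp (hv₁.trans h').symm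
      · rw [← two_nsmul_eq_zero, two_nsmul, ← sub_eq_self (a := a 0), ← sub_sub]
        exact (hv₁.trans h').symm
  refine ⟨hτ, fun q hq => ?_⟩
  rcases Nat.eq_zero_or_pos q with rfl | hq1
  · rfl
  · rcases hstep q hq1 hq with h' | h' <;> simpa [hτ] using h'

end Eval

section Arrangement

theorem blockP_nonempty (hn : 1 ≤ n) {b : ℕ} (hb : b ≤ n) : (blockP n (b + 1)).Nonempty := by
  obtain ⟨σ, hσ, hσb⟩ : ∃ σ : Shape, σ.Valid n ∧ σ.block = b := by
    rcases (by omega : b = 0 ∨ b = 1 ∨ 2 ≤ b) with rfl | rfl | h2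
    · exact ⟨apex 0 1, ⟨hn, Or.inl rfl⟩, rfl⟩
    · exact ⟨apex 0 0, ⟨Nat.zero_le _, Or.inl rfl⟩, rfl⟩
    · exact ⟨apex 0 b, ⟨hb, Or.inl rfl⟩, by simp only [block, ite_eq_right_iff]; omega⟩
  exact ⟨_, (mem_blockP hn b).mpr ⟨σ, hσ, hσb, rfl⟩⟩

theorem blockP_subset_csaForms (hn : 1 ≤ n) (b : ℕ) :
    blockP n (b + 1) ⊆ csaForms (pathTriangle n 1) := fun _ hf =>
  let ⟨σ, hσ, _, hf⟩ := (mem_blockP hn b).mp hf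
  mem_csaForms.mpr ⟨σ, hσ, hf⟩

theorem existsUnique_mem_blockP (hn : 1 ≤ n) {f : (Fin (n + 1) → ℚ) →ₗ[ℚ] ℚ}
    (hf : f ∈ csaForms (pathTriangle n 1)) : ∃! b : Fin (n + 1), f ∈ blockP n (b.val + 1) := by
  obtain ⟨σ, hσ, rfl⟩ := mem_csaForms.mp hf
  refine ⟨⟨σ.block, Nat.lt_succ_of_le (σ.block_le hσ hn)⟩,
    (mem_blockP hn _).mpr ⟨σ, hσ, rfl, rfl⟩, fun b hb => ?_⟩
  obtain ⟨ρ, hρ, hρb, hform⟩ := (mem_blockP hn _).mp hb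
  obtain rfl := form_injOn hρ hσ hform
  exact Fin.ext hρb.symm

theorem linearIndependent_of_mem_blockP (hn : 1 ≤ n)
    {g : Fin (n + 1) → (Fin (n + 1) → ℚ) →ₗ[ℚ] ℚ} (hg : ∀ b, g b ∈ blockP n (b.val + 1)) :
    LinearIndependent ℚ g := by
  refine linearIndependent_of_forall_apply_eq_zero (by simp) fun x hx => ?_
  choose σ hσ hσb hσg using fun b : Fin (n + 1) => (mem_blockP hn b.val).mp (hg b)
  obtain ⟨hlast, hseg⟩ := eq_zero_of_forall_exists_block_eval_eq_zero (n := n)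
    (a := fun q => linForm (pathSeg n 0 q) x) (τ := x (Fin.last n)) fun b hb => by
      refine ⟨σ ⟨b, by omega⟩, hσ _, hσb _, ?_⟩
      have := hx ⟨b, by omega⟩
      rw [← hσg, form_eq_eval (hσ _), ← Module.Dual.eval_apply (R := ℚ), map_eval] at this
      exact this
  funext j
  rcases (Fin.lt_or_eq_of_le (Fin.le_last j)) with hj | rfl
  · have hsingle : pathSeg n j.val (j.val + 1) = {j} := by
      ext v
      simp only [mem_pathSeg, mem_singleton, Fin.ext_iff]
      omega
    have := congrArg (· x) (linForm_pathSeg (n := n) (Nat.le_succ j.val))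
    simp only [hsingle, linForm_singleton, LinearMap.proj_apply, LinearMap.sub_apply] at this
    rw [this, hseg _ hj, hseg _ (Nat.le_of_lt hj), sub_self]
    rfl
  · exact hlast

theorem le_ker_form_iff (X : Submodule ℚ (Fin (n + 1) → ℚ)) {σ : Shape} (hσ : σ.Valid n) :
    X ≤ LinearMap.ker (σ.form n) ↔
      σ.Vanishes (fun q => (linForm (pathSeg n 0 q)).domRestrict X)
        (fun p => (linForm (pathSeg n 0 p)).domRestrict X -
          (LinearMap.proj (Fin.last n)).domRestrict X) := by
  have hdom (f : (Fin (n + 1) → ℚ) →ₗ[ℚ] ℚ) : X ≤ LinearMap.ker f ↔ f.domRestrict X = 0 :=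
    ⟨fun h => LinearMap.ext fun x => h x.2, fun h x hx => LinearMap.congr_fun h ⟨x, hx⟩⟩
  rw [hdom, form_eq_eval hσ, ← eval_eq_zero_iff]
  exact Iff.of_eq (congrArg (· = 0) (map_eval (LinearMap.domRestrict' X) _ _ σ))

theorem exists_block_localization_singleton (hn : 1 ≤ n) {X : Submodule ℚ (Fin (n + 1) → ℚ)}
    (hX : ∃ f ∈ csaForms (pathTriangle n 1), X ≤ LinearMap.ker f) :
    ∃ b : Fin (n + 1), ∃ f ∈ blockP n (b.val + 1), X ≤ LinearMap.ker f ∧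
      ∀ g ∈ blockP n (b.val + 1), X ≤ LinearMap.ker g → g = f := by
  obtain ⟨_, hf₀, hXf₀⟩ := hX
  obtain ⟨σ₀, hσ₀, rfl⟩ := mem_csaForms.mp hf₀
  obtain ⟨σ, hσ, hσX, huniq⟩ := exists_vanishesAlone hn (by simp only [sub_eq_self]) sub_left_inj
    ⟨σ₀, hσ₀, (le_ker_form_iff X hσ₀).mp hXf₀⟩
  refine ⟨⟨σ.block, Nat.lt_succ_of_le (σ.block_le hσ hn)⟩, σ.form n,
    (mem_blockP hn _).mpr ⟨σ, hσ, rfl, rfl⟩, (le_ker_form_iff X hσ).mpr hσX, fun g hg hXg => ?_⟩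
  obtain ⟨ρ, hρ, hρb, rfl⟩ := (mem_blockP hn _).mp hg
  rw [huniq ρ hρ ((le_ker_form_iff X hρ).mp hXg) hρb]

end Arrangement

end PathTriangle

open PathTriangle

/-- For every `n ≥ 2` the connected subgraph arrangement of the
path-with-triangle graph `Δ_{n,1}` is factored; in fact the partition
`(π₁, …, π_{n+1})` defined in `blockP` is a nice partition of `𝒜_{Δ_{n,1}}`. -/
theorem csa_pathTriangle_one_factored (n : ℕ) (hn : 2 ≤ n) :
    IsFactored (csaForms (pathTriangle n 1)) ∧
      IsNicePartition (csaForms (pathTriangle n 1))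
        (fun b : Fin (n + 1) => blockP n (b.val + 1)) := by
  have hn1 : 1 ≤ n := by omega
  have hnice : IsNicePartition (csaForms (pathTriangle n 1))
      (fun b : Fin (n + 1) => blockP n (b.val + 1)) := by
    refine ⟨fun b => blockP_nonempty hn1 (Nat.lt_succ_iff.mp b.2),
      fun b => blockP_subset_csaForms hn1 b, fun f hf => existsUnique_mem_blockP hn1 hf,
      fun g hg => linearIndependent_of_mem_blockP hn1 hg, ?_⟩
    rintro X ⟨B, hB, rfl⟩ hX
    obtain ⟨f, hf⟩ := B.nonempty_of_ne_empty (by rintro rfl; simp at hX)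
    exact exists_block_localization_singleton hn1 ⟨f, hB hf, iInf₂_le f hf⟩
  exact ⟨⟨n + 1, _, hnice⟩, hnice⟩
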